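/- arXiv:1412.6589 — 7 statements merged into one kernel-verified Lean document; each statement's English description precedes it below -/
import Mathlib

section
/- Let n, m be positive integers and let c, c' : Fin n → Fin n → GL(m, ℂ) both satisfy the hexagon relation (c i j = (c k j)*(c i k) and c' i j = (c' k j)*(c' i k) for all i, j, k). Then there exists a family φ : Fin n → GL(m, ℂ) such that c' i j = (φ j) * (c i j) * (φ i)⁻¹ for all i, j. In particular, every solution c can be transformed to the trivial solution c' i j = 1, so any two objects of D(M_n) of the same size m are isomorphic. -/
/-- Any two hexagon families `c, c' : Fin n → Fin n → GL(m, ℂ)` are related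
by a gauge transformation `c' i j = (φ j) * (c i j) * (φ i)⁻¹`; hence any two objects of
`D(M_n)` of the same size `m` are isomorphic. -/
theorem hexagon_solutions_gauge_equivalent (n m : ℕ) (hn : 0 < n) (hm : 0 < m)
    (c c' : Fin n → Fin n → Matrix.GeneralLinearGroup (Fin m) ℂ)
    (hex : ∀ i j k : Fin n, c i j = c k j * c i k)
    (hex' : ∀ i j k : Fin n, c' i j = c' k j * c' i k) :
    ∃ φ : Fin n → Matrix.GeneralLinearGroup (Fin m) ℂ,
      ∀ i j : Fin n, c' i j = φ j * c i j * (φ i)⁻¹ := by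
  set z : Fin n := ⟨0, hn⟩
  refine ⟨fun i => c' z i * (c z i)⁻¹, fun i j => ?_⟩
  have h1 : c i j = c z j * (c z i)⁻¹ := by
    rw [hex z j i]; group
  have h2 : c' i j = c' z j * (c' z i)⁻¹ := by
    rw [hex' z j i]; group
  rw [h1, h2, mul_inv_rev]
  group
end

section
/- Let L be a finite type with an involution * and a subset L₀ ⊆ L, and let N : L → L → L → ℕ be a multi-fusion rule on (L, L₀). Then every label a ∈ L has a unique grading: there exists exactly one pair (α, β) ∈ L₀ × L₀ such that for all b ∈ L and α', β' ∈ L₀, N α' a b = (if α' = α ∧ b = a then 1 else 0) and N a β' b = (if β' = β ∧ b = a then 1 else 0). -/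
/-- A multi-fusion rule on a finite label set `L` with involution `star` and trivial
subset `L₀`. -/
def IsMultiFusionRule {L : Type*} [Fintype L] [DecidableEq L] (star : L → L)
    (L₀ : Finset L) (N : L → L → L → ℕ) : Prop :=
  (∀ a b : L, ∑ α ∈ L₀, N α a b = if a = b then 1 else 0) ∧
  (∀ a b : L, ∑ α ∈ L₀, N a α b = if a = b then 1 else 0) ∧
  (∀ a b : L, ∑ α ∈ L₀, N a b α = if a = star b then 1 else 0) ∧
  (∀ a b c d : L, ∑ x : L, N a b x * N x c d = ∑ x : L, N a x d * N b c x)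

/-- The label `a` has grading `(α, β) ∈ L₀ × L₀`. -/
def HasGrading {L : Type*} [DecidableEq L] (L₀ : Finset L) (N : L → L → L → ℕ)
    (a α β : L) : Prop :=
  α ∈ L₀ ∧ β ∈ L₀ ∧
  (∀ b : L, ∀ α' ∈ L₀, N α' a b = if α' = α ∧ b = a then 1 else 0) ∧
  (∀ b : L, ∀ β' ∈ L₀, N a β' b = if β' = β ∧ b = a then 1 else 0)

private lemma sum_eq_one_aux {L : Type*} [DecidableEq L] (s : Finset L) (f : L → ℕ)
    (h : ∑ x ∈ s, f x = 1) :
    ∃ a ∈ s, f a = 1 ∧ ∀ b ∈ s, b ≠ a → f b = 0 := by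
  obtain ⟨a, ha, hfa⟩ := Finset.exists_ne_zero_of_sum_ne_zero (h ▸ one_ne_zero)
  have h2 : f a + ∑ x ∈ s.erase a, f x = 1 := by
    rw [Finset.add_sum_erase _ _ ha, h]
  have hsum0 : ∑ x ∈ s.erase a, f x = 0 := by omega
  refine ⟨a, ha, by omega, fun b hb hba => ?_⟩
  exact (Finset.sum_eq_zero_iff.mp hsum0) b (Finset.mem_erase.mpr ⟨hba, hb⟩)

/-- every label of a multi-fusion rule has a unique grading. -/
theorem multiFusion_grading_existsUnique {L : Type*} [Fintype L] [DecidableEq L]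
    (star : L → L) (hstar : ∀ a, star (star a) = a) (L₀ : Finset L)
    (N : L → L → L → ℕ) (hN : IsMultiFusionRule star L₀ N) (a : L) :
    ∃! p : L × L, HasGrading L₀ N a p.1 p.2 := by
  obtain ⟨h1, h2, -, -⟩ := hN
  obtain ⟨α, hαmem, hα1, hα0⟩ := sum_eq_one_aux L₀ (fun x => N x a a)
    (by rw [h1 a a, if_pos rfl])
  obtain ⟨β, hβmem, hβ1, hβ0⟩ := sum_eq_one_aux L₀ (fun x => N a x a)
    (by rw [h2 a a, if_pos rfl])
  have hL : ∀ b : L, ∀ α' ∈ L₀, N α' a b = if α' = α ∧ b = a then 1 else 0 := by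
    intro b α' hα'
    by_cases hb : b = a
    · subst hb
      by_cases he : α' = α
      · subst he; simp [hα1]
      · simp [he, hα0 α' hα' he]
    · have : ∑ x ∈ L₀, N x a b = 0 := by rw [h1 a b, if_neg (fun h => hb h.symm)]
      simp [hb, (Finset.sum_eq_zero_iff.mp this) α' hα']
  have hR : ∀ b : L, ∀ β' ∈ L₀, N a β' b = if β' = β ∧ b = a then 1 else 0 := by
    intro b β' hβ'
    by_cases hb : b = a
    · subst hb
      by_cases he : β' = β
      · subst he; simp [hβ1]
      · simp [he, hβ0 β' hβ' he]
    · have : ∑ x ∈ L₀, N a x b = 0 := by rw [h2 a b, if_neg (fun h => hb h.symm)]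
      simp [hb, (Finset.sum_eq_zero_iff.mp this) β' hβ']
  refine ⟨(α, β), ⟨hαmem, hβmem, hL, hR⟩, ?_⟩
  rintro ⟨α', β'⟩ ⟨hα'mem, hβ'mem, hL', hR'⟩
  have e1 : N α a a = if α = α' ∧ a = a then 1 else 0 := hL' a α hαmem
  have e2 : N a β a = if β = β' ∧ a = a then 1 else 0 := hR' a β hβmem
  rw [hα1] at e1
  rw [hβ1] at e2
  simp only [and_true] at e1 e2
  have c1 : α = α' := by by_contra h; rw [if_neg h] at e1; exact one_ne_zero e1
  have c2 : β = β' := by by_contra h; rw [if_neg h] at e2; exact one_ne_zero e2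
  rw [← c1, ← c2]
end

section
/- Let L be a finite type with an involution * and a subset L₀ ⊆ L, and let N : L → L → L → ℕ be a multi-fusion rule on (L, L₀). Suppose a, b, c ∈ L have gradings (α, β), (γ, δ), (ε, ζ) ∈ L₀ × L₀ respectively. If N a b c ≠ 0 then α = ε, β = γ, and δ = ζ. -/
/-- if `N a b c ≠ 0` and `a, b, c` have gradings `(α, β)`, `(γ, δ)`,
`(ε, ζ)` respectively, then `α = ε`, `β = γ`, and `δ = ζ`. -/
theorem multiFusion_grading_compatible {L : Type*} [Fintype L] [DecidableEq L]
    (star : L → L) (hstar : ∀ a, star (star a) = a) (L₀ : Finset L)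
    (N : L → L → L → ℕ) (hN : IsMultiFusionRule star L₀ N)
    (a b c α β γ δ ε ζ : L)
    (ha : HasGrading L₀ N a α β) (hb : HasGrading L₀ N b γ δ)
    (hc : HasGrading L₀ N c ε ζ) (habc : N a b c ≠ 0) :
    α = ε ∧ β = γ ∧ δ = ζ := by
  obtain ⟨-, -, -, h4⟩ := hN
  obtain ⟨hαL, hβL, haL, haR⟩ := ha
  obtain ⟨hγL, hδL, hbL, hbR⟩ := hb
  obtain ⟨hεL, hζL, hcL, hcR⟩ := hc
  -- β = γ
  have key1 := h4 a β b c
  have l1 : ∑ x : L, N a β x * N x b c = N a b c := by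
    rw [Finset.sum_eq_single a]
    · rw [haR a β hβL]; simp
    · intro x _ hx; rw [haR x β hβL]; simp [hx]
    · simp
  have r1 : ∑ x : L, N a x c * N β b x = if β = γ then N a b c else 0 := by
    rw [Finset.sum_eq_single b]
    · rw [hbL b β hβL]; simp [mul_ite]
    · intro x _ hx; rw [hbL x β hβL]; simp [hx]
    · simp
  rw [l1, r1] at key1
  have hβγ : β = γ := by
    by_contra h; rw [if_neg h] at key1; exact habc key1
  -- α = ε
  have key2 := h4 ε a b c
  have l2 : ∑ x : L, N ε a x * N x b c = if ε = α then N a b c else 0 := by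
    rw [Finset.sum_eq_single a]
    · rw [haL a ε hεL]; simp [ite_mul]
    · intro x _ hx; rw [haL x ε hεL]; simp [hx]
    · simp
  have r2 : N a b c ≤ ∑ x : L, N ε x c * N a b x := by
    have := Finset.single_le_sum (f := fun x => N ε x c * N a b x)
      (fun i _ => Nat.zero_le _) (Finset.mem_univ c)
    simpa [hcL c ε hεL] using this
  have hαε : α = ε := by
    by_contra h
    rw [l2, if_neg (fun he => h he.symm)] at key2
    omega
  -- δ = ζ
  have key3 := h4 a b ζ c
  have r3 : ∑ x : L, N a x c * N b ζ x = if ζ = δ then N a b c else 0 := by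
    rw [Finset.sum_eq_single b]
    · rw [hbR b ζ hζL]; simp [mul_ite]
    · intro x _ hx; rw [hbR x ζ hζL]; simp [hx]
    · simp
  have l3 : N a b c ≤ ∑ x : L, N a b x * N x ζ c := by
    have := Finset.single_le_sum (f := fun x => N a b x * N x ζ c)
      (fun i _ => Nat.zero_le _) (Finset.mem_univ c)
    simpa [hcR c ζ hζL] using this
  have hδζ : δ = ζ := by
    by_contra h
    rw [r3, if_neg (fun he => h he.symm)] at key3
    omega
  exact ⟨hαε, hβγ, hδζ⟩
end

section
/- Let L be a finite type with an involution * and a subset L₀ ⊆ L, and let N : L → L → L → ℕ be a multi-fusion rule on (L, L₀). Then: (1) every α ∈ L₀ has grading (α, α) and satisfies α* = α; and (2) if a ∈ L has grading (α, β), then its dual a* has grading (β, α). -/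
private lemma mfr_sum_one_unique {L : Type*} [DecidableEq L] {s : Finset L} {f : L → ℕ}
    (h : ∑ x ∈ s, f x = 1) {x : L} (hx : x ∈ s) (hfx : 1 ≤ f x) :
    f x = 1 ∧ ∀ y ∈ s, y ≠ x → f y = 0 := by
  have hle : f x ≤ 1 := h ▸ Finset.single_le_sum (fun i _ => Nat.zero_le _) hx
  have hfx1 : f x = 1 := le_antisymm hle hfx
  refine ⟨hfx1, fun y hy hyx => ?_⟩
  have hadd := Finset.add_sum_erase s f hx
  rw [h, hfx1] at hadd
  have h0 : ∑ z ∈ s.erase x, f z = 0 := by omega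
  exact Finset.sum_eq_zero_iff.mp h0 y (Finset.mem_erase.mpr ⟨hyx, hy⟩)

private lemma mfr_sum_one_exists {L : Type*} {s : Finset L} {f : L → ℕ}
    (h : ∑ x ∈ s, f x = 1) : ∃ x ∈ s, 1 ≤ f x := by
  by_contra hc
  push_neg at hc
  have : ∑ x ∈ s, f x = 0 := Finset.sum_eq_zero (fun x hx => by have := hc x hx; omega)
  omega

/-- (1) every `α ∈ L₀` has grading `(α, α)` and is self-dual;
(2) if `a` has grading `(α, β)` then `a*` has grading `(β, α)`. -/
theorem multiFusion_grading_unit_and_dual {L : Type*} [Fintype L] [DecidableEq L]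
    (star : L → L) (hstar : ∀ a, star (star a) = a) (L₀ : Finset L)
    (N : L → L → L → ℕ) (hN : IsMultiFusionRule star L₀ N) :
    (∀ α ∈ L₀, HasGrading L₀ N α α α ∧ star α = α) ∧
    (∀ a α β : L, HasGrading L₀ N a α β → HasGrading L₀ N (star a) β α) := by
  obtain ⟨h1, h2, h3, h4⟩ := hN
  -- units annihilate off-diagonal entries
  have hz1 : ∀ γ ∈ L₀, ∀ a b : L, a ≠ b → N γ a b = 0 := fun γ hγ a b hab =>
    Finset.sum_eq_zero_iff.mp ((h1 a b).trans (if_neg hab)) γ hγ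
  have hz2 : ∀ β ∈ L₀, ∀ a b : L, a ≠ b → N a β b = 0 := fun β hβ a b hab =>
    Finset.sum_eq_zero_iff.mp ((h2 a b).trans (if_neg hab)) β hβ
  -- units are self-dual
  have hstar0 : ∀ α ∈ L₀, star α = α := by
    intro α hα
    have hsum : ∑ γ ∈ L₀, N α (star α) γ = 1 := by
      rw [h3 α (star α), if_pos (hstar α).symm]
    obtain ⟨γ, hγ, hγ1⟩ := mfr_sum_one_exists hsum
    have hγeq : star α = γ := by
      by_contra hne
      have := hz1 α hα (star α) γ hne
      omega
    subst hγeq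
    by_contra hne
    have := hz2 (star α) hγ α (star α) (fun h => hne h.symm)
    omega
  have hNααα : ∀ α ∈ L₀, 1 ≤ N α α α := by
    intro α hα
    have hsum : ∑ γ ∈ L₀, N α α γ = 1 := by
      have := h3 α α
      rw [hstar0 α hα, if_pos rfl] at this
      exact this
    obtain ⟨γ, hγ, hγ1⟩ := mfr_sum_one_exists hsum
    have he : α = γ := by
      by_contra hne
      have := hz1 α hα α γ hne
      omega
    subst he
    exact hγ1
  -- units have grading (α, α)
  have hunit : ∀ α ∈ L₀, HasGrading L₀ N α α α := by
    intro α hα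
    refine ⟨hα, hα, ?_, ?_⟩
    · intro b α' hα'
      by_cases hb : b = α
      · rw [hb]
        have hsum : ∑ γ ∈ L₀, N γ α α = 1 := by rw [h1, if_pos rfl]
        obtain ⟨he1, he2⟩ := mfr_sum_one_unique hsum hα (hNααα α hα)
        by_cases he : α' = α
        · rw [if_pos ⟨he, rfl⟩, he]; exact he1
        · rw [if_neg (by tauto)]; exact he2 α' hα' he
      · rw [if_neg (by tauto)]
        exact hz1 α' hα' α b (fun h => hb h.symm)
    · intro b β' hβ'
      by_cases hb : b = α
      · rw [hb]
        have hsum : ∑ γ ∈ L₀, N α γ α = 1 := by rw [h2, if_pos rfl]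
        obtain ⟨he1, he2⟩ := mfr_sum_one_unique hsum hα (hNααα α hα)
        by_cases he : β' = α
        · rw [if_pos ⟨he, rfl⟩, he]; exact he1
        · rw [if_neg (by tauto)]; exact he2 β' hβ' he
      · rw [if_neg (by tauto)]
        exact hz2 β' hβ' α b (fun h => hb h.symm)
  -- duality of gradings
  have hdual : ∀ a α β : L, HasGrading L₀ N a α β → HasGrading L₀ N (star a) β α := by
    rintro a α β ⟨hα, hβ, hgl, hgr⟩
    -- Step P1 : N (star a) a β ≥ 1
    have hsum1 : ∑ γ ∈ L₀, N (star a) a γ = 1 := by rw [h3, if_pos rfl]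
    obtain ⟨γ₁, hγ₁, hγ₁1⟩ := mfr_sum_one_exists hsum1
    have hA := h4 (star a) a β γ₁
    rw [Finset.sum_eq_single_of_mem γ₁ (Finset.mem_univ _)
        (fun x _ hx => by rw [hz2 β hβ x γ₁ hx, Nat.mul_zero]),
      Finset.sum_eq_single_of_mem a (Finset.mem_univ _)
        (fun x _ hx => by rw [hgr x β hβ, if_neg (by tauto), Nat.mul_zero])] at hA
    rw [hgr a β hβ, if_pos ⟨rfl, rfl⟩, Nat.mul_one] at hA
    -- hA : N (star a) a γ₁ * N γ₁ β γ₁ = N (star a) a γ₁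
    have hβγ₁ : β = γ₁ := by
      by_contra hne
      have h0 := hz1 γ₁ hγ₁ β γ₁ hne
      rw [h0, Nat.mul_zero] at hA
      omega
    have hP1 : 1 ≤ N (star a) a β := by rw [hβγ₁]; exact hγ₁1
    -- Step P0 : N a (star a) α ≥ 1
    have hsum0 : ∑ γ ∈ L₀, N a (star a) γ = 1 := by rw [h3, if_pos (hstar a).symm]
    obtain ⟨γ₀, hγ₀, hγ₀1⟩ := mfr_sum_one_exists hsum0
    have hB := h4 α a (star a) γ₀
    rw [Finset.sum_eq_single_of_mem a (Finset.mem_univ _)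
        (fun x _ hx => by rw [hgl x α hα, if_neg (by tauto), Nat.zero_mul]),
      Finset.sum_eq_single_of_mem γ₀ (Finset.mem_univ _)
        (fun x _ hx => by rw [hz1 α hα x γ₀ hx, Nat.zero_mul])] at hB
    rw [hgl a α hα, if_pos ⟨rfl, rfl⟩, Nat.one_mul] at hB
    -- hB : N a (star a) γ₀ = N α γ₀ γ₀ * N a (star a) γ₀
    have hαγ₀ : α = γ₀ := by
      by_contra hne
      have h0 : N α γ₀ γ₀ = 0 := by
        have := (hunit γ₀ hγ₀).2.2.1 γ₀ α hα
        rw [if_neg (by tauto)] at this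
        exact this
      rw [h0, Nat.zero_mul] at hB
      omega
    have hP0 : 1 ≤ N a (star a) α := by rw [hαγ₀]; exact hγ₀1
    -- Step P3 : N (star a) α (star a) ≥ 1
    have hsum3 : ∑ γ ∈ L₀, N (star a) γ (star a) = 1 := by rw [h2, if_pos rfl]
    obtain ⟨t, ht, ht1⟩ := mfr_sum_one_exists hsum3
    have hC := h4 a (star a) t α
    rw [Finset.sum_eq_single_of_mem α (Finset.mem_univ _)
        (fun x _ hx => by rw [hz2 t ht x α hx, Nat.mul_zero]),
      Finset.sum_eq_single_of_mem (star a) (Finset.mem_univ _)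
        (fun x _ hx => by rw [hz2 t ht (star a) x (fun h => hx h.symm), Nat.mul_zero])] at hC
    -- hC : N a (star a) α * N α t α = N a (star a) α * N (star a) t (star a)
    have htα : t = α := by
      by_contra hne
      have h0 : N α t α = 0 := hz1 α hα t α hne
      have hpos : 0 < N a (star a) α * N (star a) t (star a) := Nat.mul_pos hP0 ht1
      rw [h0, Nat.mul_zero] at hC
      omega
    have hP3 : 1 ≤ N (star a) α (star a) := by rw [← htα]; exact ht1
    -- Step P4 : N β (star a) (star a) ≥ 1
    have hsum4 : ∑ γ ∈ L₀, N γ (star a) (star a) = 1 := by rw [h1, if_pos rfl]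
    obtain ⟨s, hs, hs1⟩ := mfr_sum_one_exists hsum4
    have hD := h4 s (star a) a β
    rw [Finset.sum_eq_single_of_mem (star a) (Finset.mem_univ _)
        (fun x _ hx => by rw [hz1 s hs (star a) x (fun h => hx h.symm), Nat.zero_mul]),
      Finset.sum_eq_single_of_mem β (Finset.mem_univ _)
        (fun x _ hx => by rw [hz1 s hs x β hx, Nat.zero_mul])] at hD
    -- hD : N s (star a) (star a) * N (star a) a β = N s β β * N (star a) a β
    have hsβ : s = β := by
      by_contra hne
      have h0 : N s β β = 0 := by
        have := (hunit β hβ).2.2.1 β s hs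
        rw [if_neg (by tauto)] at this
        exact this
      have hpos : 0 < N s (star a) (star a) * N (star a) a β := Nat.mul_pos hs1 hP1
      rw [h0, Nat.zero_mul] at hD
      omega
    have hP4 : 1 ≤ N β (star a) (star a) := by rw [← hsβ]; exact hs1
    -- assemble
    refine ⟨hβ, hα, ?_, ?_⟩
    · intro b β' hβ'
      by_cases hb : b = star a
      · subst hb
        obtain ⟨he1, he2⟩ := mfr_sum_one_unique hsum4 hβ hP4
        by_cases he : β' = β
        · subst he; rw [if_pos ⟨rfl, rfl⟩]; exact he1
        · rw [if_neg (by tauto)]; exact he2 β' hβ' he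
      · rw [if_neg (by tauto)]
        exact hz1 β' hβ' (star a) b (fun h => hb h.symm)
    · intro b α' hα'
      by_cases hb : b = star a
      · subst hb
        obtain ⟨he1, he2⟩ := mfr_sum_one_unique hsum3 hα hP3
        by_cases he : α' = α
        · subst he; rw [if_pos ⟨rfl, rfl⟩]; exact he1
        · rw [if_neg (by tauto)]; exact he2 α' hα' he
      · rw [if_neg (by tauto)]
        exact hz2 α' hα' (star a) b (fun h => hb h.symm)
  exact ⟨fun α hα => ⟨hunit α hα, hstar0 α hα⟩, hdual⟩
end

section
/- Let (L, 0, *) be a label set with multiplicity-free fusion rule δ, loop weight w, signs α : L → {1, −1} with α i · α j · α k = 1 whenever δ i j k = 1, and let T : L⁶ → ℂ be a symmetrized tetrahedral symbol (satisfying tetrahedral symmetry, the pentagon identity, and the orthogonality condition). Then for every j ∈ L, T(j*, j, 0; 0, 0, j) ≠ 0 and (w j) * (T(j*, j, 0; 0, 0, j))² = 1; equivalently, setting v_j := 1 / T(j*, j, 0; 0, 0, j), one has v_j² = w_j. -/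
/-- A multiplicity-free fusion rule on a finite label set `L` with distinguished
trivial label `zero` and involution `star` (with `star zero = zero`). -/
def IsFusionRule {L : Type*} [Fintype L] [DecidableEq L] (zero : L) (star : L → L)
    (δ : L → L → L → ℕ) : Prop :=
  (∀ a b c : L, δ a b c = 0 ∨ δ a b c = 1) ∧
  (∀ a b c : L, δ a b c = δ b c a) ∧
  (∀ a b c : L, δ a b c = δ (star c) (star b) (star a)) ∧
  (∀ j : L, δ zero j (star j) = 1) ∧
  (∀ i j : L, i ≠ j → δ zero i (star j) = 0)

/-- A loop weight for a fusion rule `δ`. -/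
def IsLoopWeight {L : Type*} [Fintype L] (star : L → L) (δ : L → L → L → ℕ)
    (w : L → ℝ) : Prop :=
  (∀ a : L, w a ≠ 0) ∧ (∀ a : L, w (star a) = w a) ∧
  (∀ a b : L, ∑ c : L, w c * (δ a b (star c) : ℝ) = w a * w b)

/-- A symmetrized tetrahedral symbol `T i j m k l n` (written `T^{ijm}_{kln}`), for a
fusion rule `δ`, loop weight `w`, and signs `sgn`: it satisfies the full tetrahedral
symmetry, the pentagon identity, and the orthogonality condition. -/
def IsTetrahedralSymbol {L : Type*} [Fintype L] [DecidableEq L] (star : L → L)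
    (δ : L → L → L → ℕ) (w : L → ℝ) (sgn : L → ℝ)
    (T : L → L → L → L → L → L → ℂ) : Prop :=
  (∀ i j m k l n : L,
      T i j m k l n = T m i j n (star k) (star l) ∧
      T i j m k l n = T k l (star m) i j (star n) ∧
      T i j m k l n =
        ((sgn m * sgn n : ℝ) : ℂ) *
          (starRingEnd ℂ) (T (star j) (star i) (star m) (star l) (star k) n)) ∧
  (∀ m l q k p j i s r : L,
      ∑ n : L, (w n : ℂ) * T m l q k (star p) n * T j i p m n (star s) *
          T j (star s) n l k (star r)
        = T j i p (star q) k (star r) * T r i (star q) m l (star s)) ∧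
  (∀ m l q k p i : L,
      ∑ n : L, (w n : ℂ) * T m l q k (star p) n * T (star l) (star m) (star i) p (star k) n
        = (if i = q then ((w i : ℝ) : ℂ)⁻¹ else 0) * (δ m l q : ℂ) * (δ (star k) i p : ℂ))

/-- for a symmetrized tetrahedral symbol, `T^{j*j0}_{00j} ≠ 0` and
`w_j · (T^{j*j0}_{00j})² = 1`, i.e. `v_j := 1 / T^{j*j0}_{00j}` satisfies `v_j² = w_j`. -/
theorem tetrahedralSymbol_v_sq_eq_w {L : Type*} [Fintype L] [DecidableEq L]
    (zero : L) (star : L → L) (hzero : star zero = zero)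
    (hstar : ∀ a, star (star a) = a)
    (δ : L → L → L → ℕ) (hδ : IsFusionRule zero star δ)
    (w : L → ℝ) (hw : IsLoopWeight star δ w)
    (sgn : L → ℝ) (hsgn1 : ∀ i : L, sgn i = 1 ∨ sgn i = -1)
    (hsgn : ∀ i j k : L, δ i j k = 1 → sgn i * sgn j * sgn k = 1)
    (T : L → L → L → L → L → L → ℂ)
    (hT : IsTetrahedralSymbol star δ w sgn T) :
    ∀ j : L, T (star j) j zero zero zero j ≠ 0 ∧
      (w j : ℂ) * (T (star j) j zero zero zero j) ^ 2 = 1 := by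
  obtain ⟨hδ01, hcyc, hrev, hδone, hδne⟩ := hδ
  obtain ⟨hwne, hwstar, hwsum⟩ := hw
  obtain ⟨hsym, hpent, horth⟩ := hT
  have s1 : ∀ i j m k l n : L, T i j m k l n = T m i j n (star k) (star l) :=
    fun i j m k l n => (hsym i j m k l n).1
  have s2 : ∀ i j m k l n : L, T i j m k l n = T k l (star m) i j (star n) :=
    fun i j m k l n => (hsym i j m k l n).2.1
  -- δ of a zero-row
  have dlem : ∀ x y : L, δ zero x y = if y = star x then 1 else 0 := by
    intro x y
    by_cases h : y = star x
    · rw [h, if_pos rfl]; exact hδone x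
    · rw [if_neg h]
      have hne : x ≠ star y := fun he => h (by rw [he, hstar])
      have := hδne x (star y) hne
      rwa [hstar] at this
  -- w zero = 1
  have hw0 : w zero = 1 := by
    have h := hwsum zero zero
    have hterm : ∀ c : L, w c * ((δ zero zero (star c) : ℕ) : ℝ)
        = if c = zero then w zero else 0 := by
      intro c
      rw [dlem]
      by_cases hc : c = zero
      · rw [if_pos hc, if_pos (by rw [hc, hzero])]; rw [hc]; norm_num
      · rw [if_neg hc, if_neg (fun h' : star c = star zero => hc (by
          rw [← hstar c, h', hzero, hzero]))]
        norm_num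
    rw [Finset.sum_congr rfl (fun c _ => hterm c)] at h
    rw [Finset.sum_ite_eq' Finset.univ zero (fun _ => w zero)] at h
    simp only [Finset.mem_univ, if_pos] at h
    have h2 : w zero * w zero = w zero * 1 := by linarith
    exact (mul_left_cancel₀ (hwne zero) h2)
  intro j
  -- the symmetry chain: T(j*,j,q;0,0,n) = T(0,j*,n;j,0,q)
  have hchain : ∀ q n : L, T (star j) j q zero zero n = T zero (star j) n j zero q := by
    intro q n
    rw [s2 (star j) j q zero zero n]
    rw [s1 zero zero (star q) (star j) j (star n)]
    rw [hstar j]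
    rw [s1 (star q) zero zero (star n) j (star j)]
    rw [hstar n]
    rw [s2 zero (star q) zero (star j) n (star j)]
    rw [hzero, hstar j]
    rw [s1 (star j) n zero zero (star q) j]
    rw [hzero, hstar q]
  -- Claim A
  have hA : ∀ q i : L,
      (∑ n : L, (w n : ℂ) * T zero (star j) n j zero q * T zero (star j) n j zero i)
        = if q = zero ∧ i = zero then 1 else 0 := by
    intro q i
    have h := horth (star j) j q zero zero (star i)
    rw [hzero, hstar j, hstar i] at h
    simp only [hchain] at h
    rw [h]
    have d1 : δ (star j) j zero = 1 := by
      rw [hcyc, hcyc, dlem, if_pos (by rw [hstar])]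
    have dzz : (δ zero (star i) zero : ℕ) = if i = zero then 1 else 0 := by
      rw [dlem]
      by_cases hi : i = zero
      · rw [if_pos hi, if_pos (by rw [hi, hzero, hzero])]
      · rw [if_neg hi, if_neg (show ¬ zero = star (star i) from
          fun h' => hi (by rw [hstar] at h'; exact h'.symm))]
    rw [dzz]
    by_cases hq : q = zero
    · by_cases hi : i = zero
      · rw [hq, hi, hzero, d1, if_pos rfl, if_pos rfl,
          if_pos (show zero = zero ∧ zero = zero from ⟨rfl, rfl⟩), hw0]
        norm_num
      · rw [if_neg hi, if_neg (show ¬ (q = zero ∧ i = zero) from fun hc => hi hc.2)]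
        norm_num
    · by_cases hi : i = zero
      · rw [if_neg (show ¬ star i = q from fun h' => hq (by rw [← h', hi, hzero])),
          if_neg (show ¬ (q = zero ∧ i = zero) from fun hc => hq hc.1)]
        norm_num
      · rw [if_neg hi, if_neg (show ¬ (q = zero ∧ i = zero) from fun hc => hq hc.1)]
        norm_num
  -- Claim B
  have hB : ∀ n i : L,
      (∑ x : L, (w x : ℂ) * T zero (star j) n j zero x * T zero (star j) i j zero (star x))
        = if n = j ∧ i = j then ((w j : ℝ) : ℂ)⁻¹ else 0 := by
    intro n i
    have h := horth zero (star j) n j zero i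
    rw [hzero, hstar j] at h
    have hs : ∀ x : L, T j zero (star i) zero (star j) x
        = T zero (star j) i j zero (star x) := by
      intro x
      rw [s2 j zero (star i) zero (star j) x, hstar i]
    simp only [hs] at h
    rw [h]
    have d4 : δ zero (star j) n = if n = j then 1 else 0 := by
      rw [dlem]
      by_cases hn : n = j
      · rw [if_pos hn, if_pos (by rw [hn, hstar])]
      · rw [if_neg hn, if_neg (fun h' : n = star (star j) => hn (by rwa [hstar] at h'))]
    have d5 : δ (star j) i zero = if i = j then 1 else 0 := by
      rw [hcyc, hcyc, dlem]
      by_cases hi : i = j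
      · rw [if_pos hi, if_pos (by rw [hi, hstar])]
      · rw [if_neg hi, if_neg (fun h' : i = star (star j) => hi (by rwa [hstar] at h'))]
    rw [d4, d5]
    by_cases hn : n = j
    · by_cases hi : i = j
      · rw [if_pos hn, if_pos hi, if_pos (show n = j ∧ i = j from ⟨hn, hi⟩),
          if_pos (hi.trans hn.symm), hi]
        norm_num
      · rw [if_neg hi, if_neg (show ¬ (n = j ∧ i = j) from fun hc => hi hc.2)]
        norm_num
    · rw [if_neg hn, if_neg (show ¬ (n = j ∧ i = j) from fun hc => hn hc.1)]
      norm_num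
  -- the double-counted sum
  have key : (w j : ℂ) * (T zero (star j) j j zero zero) ^ 2 = 1 := by
    have e1 : (∑ n : L, ∑ m : L,
        ((w n : ℂ) * (w m : ℂ) * T zero (star j) n j zero zero * T zero (star j) m j zero zero)
          * (∑ x : L, (w x : ℂ) * T zero (star j) n j zero x * T zero (star j) m j zero (star x)))
        = (w j : ℂ) * (T zero (star j) j j zero zero) ^ 2 := by
      simp only [hB]
      have h2 : ∀ n : L, (∑ m : L,
          ((w n : ℂ) * (w m : ℂ) * T zero (star j) n j zero zero * T zero (star j) m j zero zero)
            * (if n = j ∧ m = j then ((w j : ℝ) : ℂ)⁻¹ else 0))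
          = if n = j then ((w n : ℂ) * (w j : ℂ) * T zero (star j) n j zero zero
              * T zero (star j) j j zero zero) * ((w j : ℝ) : ℂ)⁻¹ else 0 := by
        intro n
        by_cases hn : n = j
        · rw [if_pos hn]
          simp only [hn, true_and]
          rw [Finset.sum_eq_single j]
          · rw [if_pos rfl]
          · intro b _ hb; rw [if_neg hb, mul_zero]
          · intro hj; exact absurd (Finset.mem_univ j) hj
        · rw [if_neg hn]
          apply Finset.sum_eq_zero
          intro m _
          rw [if_neg (fun hc => hn hc.1), mul_zero]
      rw [Finset.sum_congr rfl (fun n _ => h2 n)]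
      rw [Finset.sum_eq_single j]
      · rw [if_pos rfl]
        have hwj : ((w j : ℝ) : ℂ) ≠ 0 := by
          exact_mod_cast Complex.ofReal_ne_zero.mpr (hwne j)
        field_simp
      · intro b _ hb; rw [if_neg hb]
      · intro hj; exact absurd (Finset.mem_univ j) hj
    have e2 : (∑ n : L, ∑ m : L,
        ((w n : ℂ) * (w m : ℂ) * T zero (star j) n j zero zero * T zero (star j) m j zero zero)
          * (∑ x : L, (w x : ℂ) * T zero (star j) n j zero x * T zero (star j) m j zero (star x)))
        = 1 := by
      have step1 : (∑ n : L, ∑ m : L,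
          ((w n : ℂ) * (w m : ℂ) * T zero (star j) n j zero zero * T zero (star j) m j zero zero)
            * (∑ x : L, (w x : ℂ) * T zero (star j) n j zero x * T zero (star j) m j zero (star x)))
          = ∑ x : L, (w x : ℂ) *
              ((∑ n : L, (w n : ℂ) * T zero (star j) n j zero zero * T zero (star j) n j zero x)
              * (∑ m : L, (w m : ℂ) * T zero (star j) m j zero zero * T zero (star j) m j zero (star x))) := by
        calc (∑ n : L, ∑ m : L,
            ((w n : ℂ) * (w m : ℂ) * T zero (star j) n j zero zero * T zero (star j) m j zero zero)
              * (∑ x : L, (w x : ℂ) * T zero (star j) n j zero x * T zero (star j) m j zero (star x)))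
            = ∑ n : L, ∑ m : L, ∑ x : L,
                ((w n : ℂ) * T zero (star j) n j zero zero * T zero (star j) n j zero x)
                * ((w m : ℂ) * T zero (star j) m j zero zero * T zero (star j) m j zero (star x))
                * (w x : ℂ) := by
              refine Finset.sum_congr rfl fun n _ => Finset.sum_congr rfl fun m _ => ?_
              rw [Finset.mul_sum]
              refine Finset.sum_congr rfl fun x _ => ?_
              ring
          _ = ∑ x : L, ∑ n : L, ∑ m : L,
                ((w n : ℂ) * T zero (star j) n j zero zero * T zero (star j) n j zero x)
                * ((w m : ℂ) * T zero (star j) m j zero zero * T zero (star j) m j zero (star x))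
                * (w x : ℂ) := by
              refine Eq.trans (Finset.sum_congr rfl fun n _ => Finset.sum_comm) ?_
              exact Finset.sum_comm
          _ = ∑ x : L, (w x : ℂ) *
              ((∑ n : L, (w n : ℂ) * T zero (star j) n j zero zero * T zero (star j) n j zero x)
              * (∑ m : L, (w m : ℂ) * T zero (star j) m j zero zero * T zero (star j) m j zero (star x))) := by
              refine Finset.sum_congr rfl fun x _ => ?_
              rw [Finset.sum_mul_sum]
              rw [Finset.mul_sum]
              refine Finset.sum_congr rfl fun n _ => ?_
              rw [Finset.mul_sum]
              refine Finset.sum_congr rfl fun m _ => ?_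
              ring
      rw [step1]
      simp only [hA]
      have hsx : ∀ x : L, (star x = zero) = (x = zero) := fun x =>
        propext ⟨fun h => by rw [← hstar x, h, hzero], fun h => by rw [h, hzero]⟩
      simp only [hsx, true_and]
      rw [Finset.sum_eq_single zero]
      · rw [if_pos rfl, hw0]
        norm_num
      · intro b _ hb
        rw [if_neg hb]
        ring
      · intro h; exact absurd (Finset.mem_univ zero) h
    rw [← e1, e2]
  have hfinal := key
  rw [← hchain zero j] at hfinal
  constructor
  · intro h0
    rw [h0] at hfinal
    simp at hfinal
  · exact hfinal
end

section
/- Let (L, 0, *) be a label set with multiplicity-free fusion rule δ, loop weight w, signs α : L → {1, −1} with α i · α j · α k = 1 whenever δ i j k = 1, and let T : L⁶ → ℂ be a symmetrized tetrahedral symbol (satisfying tetrahedral symmetry, the pentagon identity, and the orthogonality condition). Then T(i, j, m; k, l, n) = 0 unless δ i j m = 1, δ k l m* = 1, δ l i n = 1, and δ n k* j* = 1. -/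
/-- `T^{ijm}_{kln} = 0` unless `δ i j m = δ k l m* = δ l i n = δ n k* j* = 1`. -/
theorem tetrahedralSymbol_vanishes_unless_admissible {L : Type*} [Fintype L]
    [DecidableEq L] (zero : L) (star : L → L) (hzero : star zero = zero)
    (hstar : ∀ a, star (star a) = a)
    (δ : L → L → L → ℕ) (hδ : IsFusionRule zero star δ)
    (w : L → ℝ) (hw : IsLoopWeight star δ w)
    (sgn : L → ℝ) (hsgn1 : ∀ i : L, sgn i = 1 ∨ sgn i = -1)
    (hsgn : ∀ i j k : L, δ i j k = 1 → sgn i * sgn j * sgn k = 1)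
    (T : L → L → L → L → L → L → ℂ)
    (hT : IsTetrahedralSymbol star δ w sgn T) :
    ∀ i j m k l n : L,
      ¬(δ i j m = 1 ∧ δ k l (star m) = 1 ∧ δ l i n = 1 ∧ δ n (star k) (star j) = 1) →
        T i j m k l n = 0 := by
  obtain ⟨hδ01, hcyc, hflip, hδz, hδz'⟩ := hδ
  obtain ⟨hw0, hwstar, hwsum⟩ := hw
  obtain ⟨hsym, hpent, horth⟩ := hT
  have ρ : ∀ i j m k l n : L, T i j m k l n = T m i j n (star k) (star l) :=
    fun i j m k l n => (hsym i j m k l n).1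
  have τ' : ∀ i j m k l n : L, T i j m k l n = T k l (star m) i j (star n) :=
    fun i j m k l n => (hsym i j m k l n).2.1
  have κ : ∀ i j m k l n : L, T i j m k l n =
      ((sgn m * sgn n : ℝ) : ℂ) *
        (starRingEnd ℂ) (T (star j) (star i) (star m) (star l) (star k) n) :=
    fun i j m k l n => (hsym i j m k l n).2.2
  have hwC : ∀ a : L, ((w a : ℝ) : ℂ) ≠ 0 := fun a => Complex.ofReal_ne_zero.mpr (hw0 a)
  -- completeness identity (F)
  have hF : ∀ m₀ l₀ k₀ p₀ n₀ n₁ : L,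
      (∑ x : L, (w x : ℂ) * T m₀ l₀ x k₀ (star p₀) n₀ *
          T n₁ (star p₀) m₀ (star x) (star l₀) (star k₀))
        = (if n₁ = n₀ then ((w n₁ : ℝ) : ℂ)⁻¹ else 0) * (δ (star k₀) (star l₀) n₀ : ℂ) *
            (δ m₀ n₁ (star p₀) : ℂ) := by
    intro m₀ l₀ k₀ p₀ n₀ n₁
    have O := horth (star k₀) (star l₀) n₀ (star m₀) (star p₀) n₁
    simp only [hstar] at O
    rw [← O]
    refine Finset.sum_congr rfl (fun x _ => ?_)
    have e1 : T m₀ l₀ x k₀ (star p₀) n₀ = T (star k₀) (star l₀) n₀ (star m₀) p₀ x := by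
      rw [ρ m₀ l₀ x k₀ (star p₀) n₀, hstar p₀, τ' x m₀ l₀ n₀ (star k₀) p₀,
        ρ (star k₀) (star l₀) n₀ (star m₀) p₀ x, hstar m₀]
    have e2 : T l₀ k₀ (star n₁) (star p₀) m₀ x = T n₁ (star p₀) m₀ (star x) (star l₀) (star k₀) := by
      rw [τ' l₀ k₀ (star n₁) (star p₀) m₀ x, hstar n₁, ρ (star p₀) m₀ n₁ l₀ k₀ (star x)]
    rw [e1, ← e2]
  -- inverted pentagon (G)
  have hG : ∀ J I P M Lb K S R Nn : L,
      (δ (star K) (star Lb) Nn : ℂ) * (δ M Nn (star P) : ℂ) *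
        (T J I P M Nn (star S) * T J (star S) Nn Lb K (star R))
      = ∑ q : L, (w q : ℂ) * T J I P (star q) K (star R) * T R I (star q) M Lb (star S) *
          T Nn (star P) M (star q) (star Lb) (star K) := by
    intro J I P M Lb K S R Nn
    symm
    calc ∑ q : L, (w q : ℂ) * T J I P (star q) K (star R) * T R I (star q) M Lb (star S) *
            T Nn (star P) M (star q) (star Lb) (star K)
        = ∑ q : L, ((w q : ℂ) * T Nn (star P) M (star q) (star Lb) (star K)) *
            (T J I P (star q) K (star R) * T R I (star q) M Lb (star S)) := by
          exact Finset.sum_congr rfl (fun q _ => by ring)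
      _ = ∑ q : L, ∑ n : L, ((w q : ℂ) * T Nn (star P) M (star q) (star Lb) (star K)) *
            ((w n : ℂ) * T M Lb q K (star P) n * T J I P M n (star S) *
              T J (star S) n Lb K (star R)) := by
          refine Finset.sum_congr rfl (fun q _ => ?_)
          rw [← Finset.mul_sum, hpent M Lb q K P J I S R]
      _ = ∑ n : L, ∑ q : L, ((w q : ℂ) * T Nn (star P) M (star q) (star Lb) (star K)) *
            ((w n : ℂ) * T M Lb q K (star P) n * T J I P M n (star S) *
              T J (star S) n Lb K (star R)) := Finset.sum_comm
      _ = ∑ n : L, ((w n : ℂ) * T J I P M n (star S) * T J (star S) n Lb K (star R)) *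
            (∑ q : L, (w q : ℂ) * T M Lb q K (star P) n *
              T Nn (star P) M (star q) (star Lb) (star K)) := by
          refine Finset.sum_congr rfl (fun n _ => ?_)
          rw [Finset.mul_sum]
          exact Finset.sum_congr rfl (fun q _ => by ring)
      _ = ∑ n : L, ((w n : ℂ) * T J I P M n (star S) * T J (star S) n Lb K (star R)) *
            ((if Nn = n then ((w Nn : ℝ) : ℂ)⁻¹ else 0) * (δ (star K) (star Lb) n : ℂ) *
              (δ M Nn (star P) : ℂ)) := by
          refine Finset.sum_congr rfl (fun n _ => ?_)
          rw [hF M Lb K P n Nn]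
      _ = ∑ n : L, (if Nn = n then
            ((w n : ℂ) * T J I P M n (star S) * T J (star S) n Lb K (star R)) *
              (((w Nn : ℝ) : ℂ)⁻¹ * (δ (star K) (star Lb) n : ℂ) * (δ M Nn (star P) : ℂ))
            else 0) := by
          refine Finset.sum_congr rfl (fun n _ => ?_)
          by_cases h : Nn = n <;> simp [h]
      _ = ((w Nn : ℂ) * T J I P M Nn (star S) * T J (star S) Nn Lb K (star R)) *
            (((w Nn : ℝ) : ℂ)⁻¹ * (δ (star K) (star Lb) Nn : ℂ) * (δ M Nn (star P) : ℂ)) := by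
          rw [Finset.sum_ite_eq]; simp
      _ = (δ (star K) (star Lb) Nn : ℂ) * (δ M Nn (star P) : ℂ) *
            (T J I P M Nn (star S) * T J (star S) Nn Lb K (star R)) := by
          have hc : ((w Nn : ℝ) : ℂ) * ((w Nn : ℝ) : ℂ)⁻¹ = 1 := mul_inv_cancel₀ (hwC Nn)
          linear_combination (T J I P M Nn (star S) * T J (star S) Nn Lb K (star R) *
            (δ (star K) (star Lb) Nn : ℂ) * (δ M Nn (star P) : ℂ)) * hc
  -- the 2-2 consequence (★★)
  have hSS : ∀ m l q k p j i s r : L,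
      T j i p (star q) k (star r) * T r i (star q) m l (star s)
      = (δ k j (star r) : ℂ) * (δ s (star r) (star l) : ℂ) *
          (T q m l s (star r) (star i) * T q (star i) (star r) (star j) (star k) p) := by
    intro m l q k p j i s r
    have hg := hG q m l s (star j) (star k) i (star p) (star r)
    simp only [hstar] at hg
    rw [← hpent m l q k p j i s r, hg]
    have hbij : Function.Bijective star := Function.Involutive.bijective hstar
    refine Fintype.sum_bijective star hbij _ _ (fun n => ?_)
    rw [hstar n, hwstar n]
    rw [ρ m l q k (star p) n, hstar p]
    rw [τ' j i p m n (star s), hstar s, ρ m n (star p) j i s]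
    rw [ρ j (star s) n l k (star r), τ' n j (star s) (star r) (star l) (star k)]
    simp only [hstar]
  -- the kill lemma : condition 3 fails ⇒ T = 0
  have hkill : ∀ a b c d e f : L, δ e a f = 0 → T a b c d e f = 0 := by
    intro a b c d e f h0
    have hss := hSS d e (star c) (star e) d (star f) b (star f) a
    simp only [hstar] at hss
    have hz : δ (star f) (star a) (star e) = 0 := by
      rw [hflip (star f) (star a) (star e), hstar a, hstar e, hstar f]
      exact h0
    rw [hz] at hss
    simp only [Nat.cast_zero, mul_zero, zero_mul] at hss
    -- hss : T (star f) b d c (star e) (star a) * T a b c d e f = 0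
    have hk := κ a b c d e f
    have hchain : T (star b) (star a) (star c) (star e) (star d) f
        = T (star f) b d c (star e) (star a) := by
      rw [ρ (star b) (star a) (star c) (star e) (star d) f, hstar e, hstar d]
      rw [ρ (star c) (star b) (star a) f e d]
      rw [τ' (star a) (star c) (star b) d (star f) (star e), hstar b, hstar e]
      rw [ρ d (star f) b (star a) (star c) e, hstar a, hstar c]
      rw [ρ b d (star f) e a c]
    rw [hchain] at hk
    rw [hk] at hss
    have hs : ((sgn c * sgn f : ℝ) : ℂ) ≠ 0 := by
      simp only [Complex.ofReal_ne_zero]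
      rcases hsgn1 c with h | h <;> rcases hsgn1 f with h' | h' <;> rw [h, h'] <;> norm_num
    have hz0 : T (star f) b d c (star e) (star a) = 0 := by
      rcases mul_eq_zero.mp hss with h | h
      · exact h
      · rcases mul_eq_zero.mp h with h' | h'
        · exact absurd h' hs
        · simpa using congrArg (starRingEnd ℂ) h'
    rw [hk, hz0]
    simp
  -- final assembly
  intro i j m k l n hadm
  have get0 : ∀ a b c : L, δ a b c ≠ 1 → δ a b c = 0 :=
    fun a b c h => (hδ01 a b c).resolve_right h
  by_cases h1 : δ i j m = 1
  · by_cases h2 : δ k l (star m) = 1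
    · by_cases h3 : δ l i n = 1
      · by_cases h4 : δ n (star k) (star j) = 1
        · exact absurd ⟨h1, h2, h3, h4⟩ hadm
        · have h0 : δ (star n) j k = 0 := by
            rw [hflip (star n) j k, hstar n, hcyc (star k) (star j) n, hcyc (star j) n (star k)]
            exact get0 _ _ _ h4
          have e : T i j m k l n = T j m i (star l) (star n) k := by
            rw [ρ i j m k l n, ρ m i j n (star k) (star l), hstar k]
          rw [e]
          exact hkill j m i (star l) (star n) k h0
      · exact hkill i j m k l n (get0 _ _ _ h3)
    · have h0 : δ (star k) m (star l) = 0 := by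
        rw [hflip (star k) m (star l), hstar l, hstar k, hcyc l (star m) k, hcyc (star m) k l]
        exact get0 _ _ _ h2
      rw [ρ i j m k l n]
      exact hkill m i j n (star k) (star l) h0
  · have h0 : δ (star i) (star m) (star j) = 0 := by
      rw [hflip (star i) (star m) (star j), hstar j, hstar m, hstar i,
        hcyc j m i, hcyc m i j]
      exact get0 _ _ _ h1
    have e : T i j m k l n = T (star m) k l (star n) (star i) (star j) := by
      rw [τ' i j m k l n, ρ k l (star m) i j (star n)]
    rw [e]
    exact hkill (star m) k l (star n) (star i) (star j) h0
end

section
/- Fix n ≥ 1. Let L = Fin n × Fin n with involution (i,j)* = (j,i), fusion rule δ((i,j),(k,l),(m,p)) = (if j = k ∧ l = m ∧ p = i then 1 else 0), and define T : L⁶ → ℂ by T(a,b,c;d,e,f) = 1 if δ(a,b,c) = δ(d,e,c*) = δ(e,a,f) = δ(f,d*,b*) = 1 and 0 otherwise. Then T satisfies the pentagon identity: for all j,i,p,q,k,r,m,l,s ∈ L, ∑_{x ∈ L} T(m,l,q;k,p*,x) · T(j,i,p;m,x,s*) · T(j,s*,x;l,k,r*) = T(j,i,p;q*,k,r*) ·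 T(r,i,q*;m,l,s*) (here all loop weights equal 1). -/
/-- The involution on the labels of `M_n`: `(i,j)* = (j,i)`. -/
def matStar {n : ℕ} (a : Fin n × Fin n) : Fin n × Fin n := (a.2, a.1)

/-- The admissibility tensor of `M_n`: `δ((i,j),(k,l),(m,p)) = 1` iff `j = k`, `l = m`,
`p = i`. -/
def matDelta {n : ℕ} (a b c : Fin n × Fin n) : ℕ :=
  if a.2 = b.1 ∧ b.2 = c.1 ∧ c.2 = a.1 then 1 else 0

/-- The simplest normalized 6j-symbol of `M_n`: the indicator of admissibility of the
four triangles of the tetrahedron. -/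
def matT {n : ℕ} (a b c d e f : Fin n × Fin n) : ℂ :=
  if matDelta a b c = 1 ∧ matDelta d e (matStar c) = 1 ∧ matDelta e a f = 1 ∧
      matDelta f (matStar d) (matStar b) = 1 then 1 else 0

lemma matDelta_eq_one {n : ℕ} (a b c : Fin n × Fin n) :
    matDelta a b c = 1 ↔ (a.2 = b.1 ∧ b.2 = c.1 ∧ c.2 = a.1) := by
  simp [matDelta]

lemma matT_eq {n : ℕ} (a b c d e f : Fin n × Fin n) :
    matT a b c d e f = if (a.2 = b.1 ∧ b.2 = c.1 ∧ c.2 = a.1) ∧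
      (d.2 = e.1 ∧ e.2 = c.2 ∧ c.1 = d.1) ∧
      (e.2 = a.1 ∧ a.2 = f.1 ∧ f.2 = e.1) ∧
      (f.2 = d.2 ∧ d.1 = b.2 ∧ b.1 = f.1) then 1 else 0 := by
  simp [matT, matDelta_eq_one, matStar]

/-- `matT` satisfies the pentagon identity (all loop weights being `1`). -/
theorem matT_pentagon (n : ℕ) (hn : 1 ≤ n) :
    ∀ j i p q k r m l s : Fin n × Fin n,
      ∑ x : Fin n × Fin n,
          matT m l q k (matStar p) x * matT j i p m x (matStar s) *
            matT j (matStar s) x l k (matStar r)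
        = matT j i p (matStar q) k (matStar r) * matT r i (matStar q) m l (matStar s) := by
  intro j i p q k r m l s
  rw [Finset.sum_eq_single ((m.2, p.2) : Fin n × Fin n)]
  · simp only [matT_eq, matStar, and_true, true_and]
    rw [ite_zero_mul_ite_zero, ite_zero_mul_ite_zero, ite_zero_mul_ite_zero, mul_one]
    refine if_congr ?_ rfl rfl
    simp only [and_assoc]
    constructor
    · rintro ⟨a1, a2, a3, a4, a5, a6, a7, a8, a9, a10, a11, a12, a13, a14, a15, a16,
        a17, a18, a19, a20, a21, a22, a23, a24, a25, a26, a27, a28, a29, a30, a31, a32⟩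
      exact ⟨a11, a12, a13, a6, a4, a5, a27, a28, a29, a29.trans a6.symm,
        a3.trans a19, a20.trans a32, (a20.trans a32).symm, (a3.trans a19).symm,
        (a29.trans a6.symm).symm, a1, a2, a3, a30.symm, a32.symm, a31.symm, a17, a19, a20⟩
    · rintro ⟨d1, d2, d3, d4, d5, d6, d7, d8, d9, d10, d11, d12, d13, d14, d15, d16,
        d17, d18, d19, d20, d21, d22, d23, d24⟩
      exact ⟨d16, d17, d18, d5, d6, d4, d6.trans d18, d5.symm, d4.symm.trans d17.symm,
        d16.symm, d1, d2, d3, d6.trans d18, d3, d8.trans d20, d22, d22, d23, d24,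
        d8.trans d20, d22, d3, d17.trans d4, d5, d16, d7, d8, d9,
        d9.trans (d4.symm.trans d17.symm), d21.symm, d20.symm⟩
  · intro x _ hx
    have h2 : matT j i p m x (matStar s) = 0 := by
      rw [matT_eq, if_neg]
      rintro ⟨-, ⟨h1, h2, -⟩, -⟩
      exact hx (Prod.ext h1.symm h2)
    rw [h2, mul_zero, zero_mul]
  · intro h
    exact absurd (Finset.mem_univ _) h
end
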